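/- If X and Y are random variables bounded by constants ‖X‖_∞ ≤ b and ‖Y‖_∞ ≤ b, and X is measurable with respect to a σ-algebra 𝒜 while Y is measurable with respect to ℬ, then |Cov(X,Y)| ≤ 4 b² α(𝒜, ℬ), where α(𝒜,ℬ) = sup_{A∈𝒜, B∈ℬ} |P(A∩B) − P(A)P(B)| is the strong mixing coefficient. -/

import Mathlib

/-! Conditioning on `𝒜`, `Cov(X, Y) = E[X · E[Y - EY | 𝒜]] ≤ b · E|E[Y - EY | 𝒜]|`. The centred
conditional expectation has mean zero, so its `L¹` norm is twice its integral over the event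
`A = {E[Y - EY | 𝒜] ≥ 0} ∈ 𝒜`, which gives `|Cov(X, Y)| ≤ 2b · Cov(Y, 1_A)`. The same argument
for `Y` and `1_A`, conditioning on `ℬ`, gives `|Cov(Y, 1_A)| ≤ 2b · Cov(1_A, 1_B)` for some
`B ∈ ℬ`, and `Cov(1_A, 1_B) = P(A ∩ B) - P(A) P(B) ≤ α`. -/

open MeasureTheory

section
variable {Ω : Type*} {m m0 : MeasurableSpace Ω} {μ : Measure Ω}

theorem integral_mul_condExp_of_bound [IsFiniteMeasure μ] (hm : m ≤ m0) {f g : Ω → ℝ}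
    (hf : StronglyMeasurable[m] f) (hg : Integrable g μ) {c : ℝ} (hfc : ∀ᵐ ω ∂μ, |f ω| ≤ c) :
    ∫ ω, f ω * (μ[g|m]) ω ∂μ = ∫ ω, f ω * g ω ∂μ :=
  calc ∫ ω, f ω * (μ[g|m]) ω ∂μ = ∫ ω, (μ[f * g|m]) ω ∂μ :=
        integral_congr_ae (condExp_stronglyMeasurable_mul_of_bound hm hf hg c hfc).symm
    _ = ∫ ω, f ω * g ω ∂μ := integral_condExp hm

theorem integral_abs_eq_two_mul_setIntegral_nonneg_sub {h : Ω → ℝ} (hmeas : Measurable h)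
    (hh : Integrable h μ) :
    ∫ ω, |h ω| ∂μ = 2 * ∫ ω in {ω | 0 ≤ h ω}, h ω ∂μ - ∫ ω, h ω ∂μ := by
  have hs : MeasurableSet {ω | 0 ≤ h ω} := measurableSet_le measurable_const hmeas
  have hpt : ∀ ω, |h ω| = 2 * {ω | 0 ≤ h ω}.indicator h ω - h ω := by
    intro ω
    rcases le_or_gt 0 (h ω) with h0 | h0
    · rw [Set.indicator_of_mem (s := {ω | 0 ≤ h ω}) h0, abs_of_nonneg h0]; ring
    · rw [Set.indicator_of_notMem (s := {ω | 0 ≤ h ω}) h0.not_ge, abs_of_neg h0]; ring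
  rw [integral_congr_ae (Filter.Eventually.of_forall hpt),
    integral_sub ((hh.indicator hs).const_mul 2) hh, integral_const_mul, integral_indicator hs]

theorem exists_abs_integral_mul_le_setIntegral [IsFiniteMeasure μ] (hm : m ≤ m0) {f g : Ω → ℝ}
    (hf : StronglyMeasurable[m] f) {c : ℝ} (hfc : ∀ᵐ ω ∂μ, |f ω| ≤ c) (hg : Integrable g μ)
    (hg0 : ∫ ω, g ω ∂μ = 0) :
    ∃ A, MeasurableSet[m] A ∧ |∫ ω, f ω * g ω ∂μ| ≤ 2 * c * ∫ ω in A, g ω ∂μ := by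
  set h := μ[g|m]
  have hhm : StronglyMeasurable[m] h := stronglyMeasurable_condExp
  have hh : Integrable h μ := integrable_condExp
  have hA : MeasurableSet[m] {ω | 0 ≤ h ω} := measurableSet_le measurable_const hhm.measurable
  refine ⟨{ω | 0 ≤ h ω}, hA, ?_⟩
  calc |∫ ω, f ω * g ω ∂μ| = |∫ ω, f ω * h ω ∂μ| := by
        rw [integral_mul_condExp_of_bound hm hf hg hfc]
    _ ≤ ∫ ω, |f ω * h ω| ∂μ := abs_integral_le_integral_abs
    _ ≤ ∫ ω, c * |h ω| ∂μ := by
        refine integral_mono_ae ?_ (hh.abs.const_mul c) ?_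
        · exact (hh.bdd_mul (hf.mono hm).aestronglyMeasurable hfc).abs
        · filter_upwards [hfc] with ω hω
          rw [abs_mul]
          exact mul_le_mul_of_nonneg_right hω (abs_nonneg _)
    _ = c * (2 * ∫ ω in {ω | 0 ≤ h ω}, h ω ∂μ) := by
        rw [integral_const_mul, integral_abs_eq_two_mul_setIntegral_nonneg_sub
          (hhm.mono hm).measurable hh, integral_condExp hm, hg0, sub_zero]
    _ = 2 * c * ∫ ω in {ω | 0 ≤ h ω}, g ω ∂μ := by
        rw [setIntegral_condExp hm hg hA]; ring

theorem integral_mul_sub_integral {f g : Ω → ℝ} (hf : Integrable f μ)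
    (hfg : Integrable (fun ω => f ω * g ω) μ) :
    ∫ ω, f ω * (g ω - ∫ ω, g ω ∂μ) ∂μ = ∫ ω, f ω * g ω ∂μ - (∫ ω, f ω ∂μ) * ∫ ω, g ω ∂μ := by
  simp_rw [mul_sub]
  rw [integral_sub hfg (hf.mul_const _), integral_mul_const]

theorem setIntegral_sub_integral [IsFiniteMeasure μ] {A : Set Ω} (hA : MeasurableSet A)
    {g : Ω → ℝ} (hg : Integrable g μ) :
    ∫ ω in A, (g ω - ∫ ω, g ω ∂μ) ∂μ =
      ∫ ω, g ω * A.indicator 1 ω ∂μ - (∫ ω, g ω ∂μ) * ∫ ω, A.indicator 1 ω ∂μ := by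
  rw [integral_sub hg.integrableOn (integrable_const _), setIntegral_const,
    integral_indicator_one hA, smul_eq_mul, mul_comm, ← integral_indicator hA]
  congr 2 with ω
  simpa using Set.indicator_mul_right A g 1 (i := ω)

theorem exists_abs_covariance_le_covariance_indicator [IsProbabilityMeasure μ] (hm : m ≤ m0)
    {f g : Ω → ℝ} (hf : StronglyMeasurable[m] f) {c : ℝ} (hfc : ∀ᵐ ω ∂μ, |f ω| ≤ c)
    (hg : Integrable g μ) :
    ∃ A, MeasurableSet[m] A ∧
      |∫ ω, f ω * g ω ∂μ - (∫ ω, f ω ∂μ) * ∫ ω, g ω ∂μ| ≤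
        2 * c * (∫ ω, g ω * A.indicator 1 ω ∂μ - (∫ ω, g ω ∂μ) * ∫ ω, A.indicator 1 ω ∂μ) := by
  have hg₀ : Integrable (fun ω => g ω - ∫ ω, g ω ∂μ) μ := hg.sub (integrable_const _)
  obtain ⟨A, hA, hfA⟩ := exists_abs_integral_mul_le_setIntegral hm hf hfc hg₀
    (by rw [integral_sub hg (integrable_const _)]; simp)
  have hfm : AEStronglyMeasurable f μ := (hf.mono hm).aestronglyMeasurable
  refine ⟨A, hA, ?_⟩
  rwa [integral_mul_sub_integral (.of_bound hfm c hfc) (hg.bdd_mul hfm hfc),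
    setIntegral_sub_integral (hm _ hA) hg] at hfA

theorem integral_indicator_one_mul_indicator_one {A B : Set Ω} (hA : MeasurableSet A)
    (hB : MeasurableSet B) :
    ∫ ω, A.indicator (1 : Ω → ℝ) ω * B.indicator 1 ω ∂μ = μ.real (A ∩ B) := by
  rw [← integral_indicator_one (hA.inter hB), Set.inter_indicator_one]
  rfl

end

/-- Covariance inequality for bounded variables measurable with respect to two
sub-σ-algebras: `|Cov(X,Y)| ≤ 4 b² α(𝒜,ℬ)`. -/
theorem bounded_mixing_covariance_inequality {Ω : Type*} {m0 : MeasurableSpace Ω}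
    (μ : Measure Ω) [IsProbabilityMeasure μ]
    (𝒜 ℬ : MeasurableSpace Ω) (h𝒜 : 𝒜 ≤ m0) (hℬ : ℬ ≤ m0)
    (X Y : Ω → ℝ) (hX : Measurable[𝒜] X) (hY : Measurable[ℬ] Y)
    (b : ℝ) (hb : 0 < b) (hXb : ∀ᵐ ω ∂μ, |X ω| ≤ b) (hYb : ∀ᵐ ω ∂μ, |Y ω| ≤ b)
    (α : ℝ)
    (hα : IsLUB {r : ℝ | ∃ A B, MeasurableSet[𝒜] A ∧ MeasurableSet[ℬ] B ∧
      r = |(μ (A ∩ B)).toReal - (μ A).toReal * (μ B).toReal|} α) :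
    |(∫ ω, X ω * Y ω ∂μ) - (∫ ω, X ω ∂μ) * (∫ ω, Y ω ∂μ)| ≤ 4 * b ^ 2 * α := by
  have hY_int : Integrable Y μ := .of_bound (hY.mono hℬ le_rfl).aestronglyMeasurable b hYb
  obtain ⟨A, hA, hXY⟩ :=
    exists_abs_covariance_le_covariance_indicator h𝒜 hX.stronglyMeasurable hXb hY_int
  obtain ⟨B, hB, hYA⟩ := exists_abs_covariance_le_covariance_indicator hℬ hY.stronglyMeasurable
    hYb ((integrable_const 1).indicator (h𝒜 _ hA) : Integrable (A.indicator 1) μ)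
  have hAB : ∫ ω, A.indicator 1 ω * B.indicator 1 ω ∂μ -
      (∫ ω, A.indicator 1 ω ∂μ) * ∫ ω, B.indicator (1 : Ω → ℝ) ω ∂μ ≤ α := by
    rw [integral_indicator_one_mul_indicator_one (h𝒜 _ hA) (hℬ _ hB),
      integral_indicator_one (h𝒜 _ hA), integral_indicator_one (hℬ _ hB)]
    exact (le_abs_self _).trans (hα.1 ⟨A, B, hA, hB, rfl⟩)
  calc |(∫ ω, X ω * Y ω ∂μ) - (∫ ω, X ω ∂μ) * (∫ ω, Y ω ∂μ)|
      ≤ 2 * b * |∫ ω, Y ω * A.indicator 1 ω ∂μ - (∫ ω, Y ω ∂μ) * ∫ ω, A.indicator 1 ω ∂μ| :=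
        hXY.trans (by gcongr; exact le_abs_self _)
    _ ≤ 2 * b * (2 * b * α) := by gcongr; exact hYA.trans (by gcongr)
    _ = 4 * b ^ 2 * α := by ring
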